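/- Assume the functional-equation identity N(T)·D*(T) = ε·N*(T)·D(T) holds. Define M : ℕ → F by strong recursion: M_k := Σ_{i=max(0, k−d)}^{k} c(N_i)·D_{d−(k−i)}·f^i − Σ_{i=1}^{min(d, k)} M_{k−i}·c(D_i)·f^i (so that M_k depends only on the coefficients N_0, …, N_k of N and on D, f, c). Then N_{n−k} = ε·M_k for every k ∈ {0, …, n}. -/

import Mathlib

open Polynomial Finset

/-- `polyStar c f m P = Σ_{i=0}^{m} c(P_i)·f^i·T^(m−i)`. -/
noncomputable def polyStar {F : Type*} [Field F] (c : F →+* F) (f : F) (m : ℕ)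
    (P : Polynomial F) : Polynomial F :=
  ∑ i ∈ range (m + 1), C (c (P.coeff i) * f ^ i) * X ^ (m - i)

lemma coeff_mul_polyStar {F : Type*} [Field F] (c : F →+* F) (f : F) (m t : ℕ)
    (P Q : Polynomial F) :
    (P * polyStar c f m Q).coeff t
      = ∑ i ∈ range (m + 1),
          c (Q.coeff i) * f ^ i * (if m - i ≤ t then P.coeff (t - (m - i)) else 0) := by
  rw [polyStar, mul_sum, finset_sum_coeff]
  refine sum_congr rfl fun i _ => ?_
  rw [show P * (C (c (Q.coeff i) * f ^ i) * X ^ (m - i))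
      = C (c (Q.coeff i) * f ^ i) * (P * X ^ (m - i)) by ring,
    coeff_C_mul, coeff_mul_X_pow']

/-- Assume the functional-equation identity `N(T)·D*(T) = ε·N*(T)·D(T)` holds, and let
`M : ℕ → F` satisfy the strong recursion
`M_k = Σ_{i=max(0,k−d)}^{k} c(N_i)·D_{d−(k−i)}·f^i − Σ_{i=1}^{min(d,k)} M_{k−i}·c(D_i)·f^i`
(so `M_k` depends only on `N_0, …, N_k` and on `D, f, c`). Then `N_{n−k} = ε·M_k` for every
`k ∈ {0, …, n}`. -/
theorem functional_equation_M_recursion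
    {F : Type*} [Field F] (c : F →+* F) (f ε : F)
    (N D : Polynomial F) (n d : ℕ)
    (hN0 : N.coeff 0 = 1) (hD0 : D.coeff 0 = 1)
    (hn : N.natDegree = n) (hd : D.natDegree = d)
    (hfe : N * polyStar c f d D = C ε * polyStar c f n N * D)
    (M : ℕ → F)
    (hM : ∀ k : ℕ,
      M k = ∑ i ∈ Icc (k - d) k, c (N.coeff i) * D.coeff (d - (k - i)) * f ^ i
              - ∑ i ∈ Icc 1 (min d k), M (k - i) * c (D.coeff i) * f ^ i) :
    ∀ k ≤ n, N.coeff (n - k) = ε * M k := by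
  intro k
  induction k using Nat.strong_induction_on with
  | _ k ih =>
  intro hk
  -- coefficient identity at degree n + d - k
  have hco := congrArg (fun P : Polynomial F => P.coeff (n + d - k)) hfe
  rw [coeff_mul_polyStar] at hco
  rw [show C ε * polyStar c f n N * D = C ε * (D * polyStar c f n N) by ring,
    coeff_C_mul, coeff_mul_polyStar] at hco
  -- simplify LHS
  have hL : ∑ i ∈ range (d + 1),
      c (D.coeff i) * f ^ i * (if d - i ≤ n + d - k then N.coeff (n + d - k - (d - i)) else 0)
      = ∑ i ∈ range (d + 1), c (D.coeff i) * f ^ i * N.coeff (n - k + i) := by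
    refine sum_congr rfl fun i hi => ?_
    simp only [mem_range] at hi
    rw [if_pos (by omega)]
    congr 2
    omega
  rw [hL] at hco
  -- simplify RHS inner sum to the Icc sum
  have hR : ∑ i ∈ range (n + 1),
      c (N.coeff i) * f ^ i * (if n - i ≤ n + d - k then D.coeff (n + d - k - (n - i)) else 0)
      = ∑ i ∈ Icc (k - d) k, c (N.coeff i) * D.coeff (d - (k - i)) * f ^ i := by
    have hsub : Icc (k - d) k ⊆ range (n + 1) := by
      intro i hi
      simp only [mem_Icc] at hi
      simp only [mem_range]
      omega
    rw [← sum_subset hsub]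
    · refine sum_congr rfl fun i hi => ?_
      simp only [mem_Icc] at hi
      rw [if_pos (by omega)]
      rw [show n + d - k - (n - i) = d - (k - i) by omega]
      ring
    · intro i hi hni
      simp only [mem_range] at hi
      simp only [mem_Icc, not_and_or, not_le] at hni
      rcases hni with h | h
      · rw [if_neg (by omega), mul_zero]
      · rw [if_pos (by omega)]
        have hz : D.coeff (n + d - k - (n - i)) = 0 :=
          coeff_eq_zero_of_natDegree_lt (by rw [hd]; omega)
        rw [hz, mul_zero]
  rw [hR] at hco
  -- split off the j = 0 term on the left
  rw [Finset.sum_range_succ'] at hco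
  simp only [pow_zero, hD0, map_one, one_mul, mul_one, Nat.add_zero] at hco
  -- restrict the remaining sum to j+1 ≤ k and apply the induction hypothesis
  have hT : ∑ i ∈ range d, c (D.coeff (i + 1)) * f ^ (i + 1) * N.coeff (n - k + (i + 1))
      = ∑ j ∈ Icc 1 (min d k), c (D.coeff j) * f ^ j * (ε * M (k - j)) := by
    have h1 : ∑ i ∈ range d, c (D.coeff (i + 1)) * f ^ (i + 1) * N.coeff (n - k + (i + 1))
        = ∑ j ∈ Icc 1 d, c (D.coeff j) * f ^ j * N.coeff (n - k + j) := by
      rw [show Icc 1 d = Ico 1 (d + 1) by rfl, Finset.sum_Ico_eq_sum_range]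
      refine sum_congr (by rw [Nat.add_sub_cancel]) fun i _ => ?_
      rw [Nat.add_comm 1 i]
    rw [h1, ← sum_subset (s₁ := Icc 1 (min d k))
      (by intro j hj; simp only [mem_Icc] at hj ⊢; omega)]
    · refine sum_congr rfl fun j hj => ?_
      simp only [mem_Icc, le_min_iff] at hj
      rw [show n - k + j = n - (k - j) by omega, ih (k - j) (by omega) (by omega)]
    · intro j hj hnj
      simp only [mem_Icc] at hj
      simp only [mem_Icc, le_min_iff, not_and_or, not_le] at hnj
      have hz : N.coeff (n - k + j) = 0 :=
        coeff_eq_zero_of_natDegree_lt (by rw [hn]; omega)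
      rw [hz, mul_zero]
  rw [hT] at hco
  have hS2 : ∑ j ∈ Icc 1 (min d k), c (D.coeff j) * f ^ j * (ε * M (k - j))
      = ε * ∑ j ∈ Icc 1 (min d k), M (k - j) * c (D.coeff j) * f ^ j := by
    rw [mul_sum]
    exact sum_congr rfl fun j _ => by ring
  rw [hS2] at hco
  rw [hM k, mul_sub]
  linear_combination hco
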